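/- arXiv:2503.03010 — 10 statements merged into one kernel-verified Lean document; each statement's English description precedes it below -/
import Mathlib

section
/- Every element of a relatively complemented finite lattice is the join of the atoms below it. -/
open scoped Classical

/-- Every element of a relatively complemented finite lattice is the join of
the atoms below it. -/
theorem atoms_join_of_relatively_complemented
    {L : Type*} [Lattice L] [BoundedOrder L] [Fintype L]
    (hrc : ∀ L1 L2 L3 : L, L1 ≤ L2 → L2 ≤ L3 →
      ∃ L' : L, L2 ⊓ L' = L1 ∧ L2 ⊔ L' = L3)
    (x : L) :
    x = (Finset.univ.filter (fun a : L => IsAtom a ∧ a ≤ x)).sup id := by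
  set y := (Finset.univ.filter (fun a : L => IsAtom a ∧ a ≤ x)).sup id with hy
  have hyx : y ≤ x := by
    apply Finset.sup_le
    intro a ha
    simp only [Finset.mem_filter] at ha
    exact ha.2.2
  refine le_antisymm ?_ hyx
  obtain ⟨c, hc1, hc2⟩ := hrc ⊥ y x bot_le hyx
  rcases eq_or_ne c ⊥ with rfl | hcne
  · simpa using hc2.symm.le
  · exfalso
    obtain ⟨a, ha, hac⟩ := (IsAtomic.eq_bot_or_exists_atom_le c).resolve_left hcne
    have hax : a ≤ x := hac.trans (le_sup_right.trans hc2.le)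
    have hay : a ≤ y := Finset.le_sup (f := id) (by simp [ha, hax])
    have : a ≤ (⊥ : L) := hc1 ▸ le_inf hay hac
    exact ha.1 (le_bot_iff.mp this)
end

section
/- Let L be a finite complemented modular lattice and let ρ : L → ℤ be submodular (ρ(a)+ρ(b) ≥ ρ(a∨b)+ρ(a∧b)) and bounded increasing with respect to the height function (0 ≤ ρ(b)−ρ(a) ≤ hgt(b)−hgt(a) whenever a ≤ b). If L1, L2 ∈ L satisfy ρ(L1 ∨ J) = ρ(L1) for every atom J ≤ L2, then ρ(L1 ∨ L2) = ρ(L1). -/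
/-!
The elements `x` with `ρ (a ⊔ x) = ρ a` are closed under `⊔`: submodularity applied to `a ⊔ x`
and `a ⊔ y`, whose meet lies above `a`, bounds `ρ (a ⊔ x ⊔ y)` by `ρ a`. A finite complemented
modular lattice is atomistic, so `L2` is the join of the atoms below it.
-/

theorem isAtomistic_of_finite_of_complementedLattice {L : Type*} [Lattice L] [BoundedOrder L]
    [Finite L] [IsModularLattice L] [ComplementedLattice L] : IsAtomistic L := by
  have := Fintype.ofFinite L
  let := Fintype.toCompleteLattice L
  have := CompleteLattice.isCompactlyGenerated_of_wellFoundedGT (α := L)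
  exact isAtomistic_of_complementedLattice

section Submodular

variable {α β : Type*} [Lattice α] [AddCommMonoid β] [PartialOrder β]
  [IsOrderedCancelAddMonoid β] {ρ : α → β}

theorem map_sup_sup_eq_of_submodular (hmono : Monotone ρ)
    (hsub : ∀ a b, ρ (a ⊔ b) + ρ (a ⊓ b) ≤ ρ a + ρ b) {a x y : α}
    (hx : ρ (a ⊔ x) = ρ a) (hy : ρ (a ⊔ y) = ρ a) : ρ (a ⊔ (x ⊔ y)) = ρ a := by
  refine le_antisymm (le_of_add_le_add_right (a := ρ a) ?_) (hmono le_sup_left)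
  calc ρ (a ⊔ (x ⊔ y)) + ρ a
      ≤ ρ ((a ⊔ x) ⊔ (a ⊔ y)) + ρ ((a ⊔ x) ⊓ (a ⊔ y)) := by
        rw [sup_sup_sup_comm, sup_idem]
        exact add_le_add_right (hmono (le_inf le_sup_left le_sup_left)) _
    _ ≤ ρ (a ⊔ x) + ρ (a ⊔ y) := hsub _ _
    _ = ρ a + ρ a := by rw [hx, hy]

theorem map_sup_finset_sup_eq_of_submodular [OrderBot α] (hmono : Monotone ρ)
    (hsub : ∀ a b, ρ (a ⊔ b) + ρ (a ⊓ b) ≤ ρ a + ρ b) {a : α} {s : Finset α}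
    (hs : ∀ x ∈ s, ρ (a ⊔ x) = ρ a) : ρ (a ⊔ s.sup id) = ρ a :=
  Finset.sup_induction (p := fun x ↦ ρ (a ⊔ x) = ρ a) (by rw [sup_bot_eq])
    (fun _ hx _ hy ↦ map_sup_sup_eq_of_submodular hmono hsub hx hy) hs

theorem map_sup_eq_of_forall_atom_le [OrderBot α] [Finite α] [IsAtomistic α]
    (hmono : Monotone ρ) (hsub : ∀ a b, ρ (a ⊔ b) + ρ (a ⊓ b) ≤ ρ a + ρ b) {a b : α}
    (h : ∀ J, IsAtom J → J ≤ b → ρ (a ⊔ J) = ρ a) : ρ (a ⊔ b) = ρ a := by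
  classical
  have := Fintype.ofFinite α
  have hb : (Finset.univ.filter fun J ↦ IsAtom J ∧ J ≤ b).sup id = b :=
    le_antisymm (Finset.sup_le fun J hJ ↦ (Finset.mem_filter.1 hJ).2.2)
      (le_iff_atom_le_imp.2 fun J hJ hJb ↦
        Finset.le_sup (f := id) (Finset.mem_filter.2 ⟨Finset.mem_univ J, hJ, hJb⟩))
  rw [← hb]
  exact map_sup_finset_sup_eq_of_submodular hmono hsub fun J hJ ↦
    h J (Finset.mem_filter.1 hJ).2.1 (Finset.mem_filter.1 hJ).2.2

end Submodular

theorem rho_sup_eq_of_atoms_general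
    {L : Type*} [Lattice L] [BoundedOrder L] [Fintype L]
    [IsModularLattice L] [ComplementedLattice L]
    (hgt : L → ℤ)
    (ρ : L → ℤ)
    (hsub : ∀ a b : L, ρ (a ⊔ b) + ρ (a ⊓ b) ≤ ρ a + ρ b)
    (hbi : ∀ a b : L, a ≤ b → 0 ≤ ρ b - ρ a ∧ ρ b - ρ a ≤ hgt b - hgt a)
    (L1 L2 : L)
    (h : ∀ J : L, IsAtom J → J ≤ L2 → ρ (L1 ⊔ J) = ρ L1) :
    ρ (L1 ⊔ L2) = ρ L1 := by
  have := isAtomistic_of_finite_of_complementedLattice (L := L)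
  have hmono : Monotone ρ := fun a b hab ↦ sub_nonneg.1 (hbi a b hab).1
  exact map_sup_eq_of_forall_atom_le hmono hsub h

/-- Let `L` be a finite complemented modular lattice with height function `hgt`, and
`ρ : L → ℤ` submodular and bounded increasing. If `ρ (L1 ⊔ J) = ρ L1` for every atom
`J ≤ L2`, then `ρ (L1 ⊔ L2) = ρ L1`. -/
theorem rho_sup_eq_of_atoms
    {L : Type*} [Lattice L] [BoundedOrder L] [Fintype L]
    [IsModularLattice L] [ComplementedLattice L]
    (hgt : L → ℤ) (hgt_bot : hgt ⊥ = 0)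
    (hgt_cov : ∀ a b : L, a ⋖ b → hgt b = hgt a + 1)
    (ρ : L → ℤ)
    (hsub : ∀ a b : L, ρ (a ⊔ b) + ρ (a ⊓ b) ≤ ρ a + ρ b)
    (hbi : ∀ a b : L, a ≤ b → 0 ≤ ρ b - ρ a ∧ ρ b - ρ a ≤ hgt b - hgt a)
    (L1 L2 : L)
    (h : ∀ J : L, IsAtom J → J ≤ L2 → ρ (L1 ⊔ J) = ρ L1) :
    ρ (L1 ⊔ L2) = ρ L1 :=
  rho_sup_eq_of_atoms_general hgt ρ hsub hbi L1 L2 h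
end

section
/- Let L be a finite complemented modular lattice with height function hgt and let ρ : L → ℤ be a submodular, bounded increasing function with ρ(0)=0. For any M ∈ L, if I ≤ M is maximal among elements with ρ(I)=hgt(I) below M, then ρ(M)=ρ(I). -/
/-- Relative complements exist in intervals of a complemented modular lattice. -/
lemma exists_rel_compl {L : Type*} [Lattice L] [BoundedOrder L]
    [IsModularLattice L] [ComplementedLattice L]
    {I J x : L} (hIJ : I ≤ J) (hJx : J ≤ x) :
    ∃ z, I ≤ z ∧ z ≤ x ∧ J ⊓ z = I ∧ J ⊔ z = x := by
  obtain ⟨y, hy⟩ := exists_isCompl J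
  refine ⟨(y ⊓ x) ⊔ I, le_sup_right, sup_le (inf_le_right) (hIJ.trans hJx), ?_, ?_⟩
  · rw [← inf_sup_assoc_of_le _ hIJ]
    have : J ⊓ (y ⊓ x) ≤ ⊥ := by
      calc J ⊓ (y ⊓ x) ≤ J ⊓ y := inf_le_inf_left _ inf_le_left
      _ = ⊥ := hy.inf_eq_bot
    simp [le_bot_iff.mp this]
  · rw [← sup_assoc, ← sup_inf_assoc_of_le _ hJx, hy.sup_eq_top, top_inf_eq,
      sup_eq_left.mpr (hIJ.trans hJx)]

/-- If `I` is maximal among independent elements (`ρ I = hgt I`) below `M`, then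
`ρ M = ρ I`. -/
theorem rho_eq_of_maximal_independent
    {L : Type*} [Lattice L] [BoundedOrder L] [Fintype L]
    [IsModularLattice L] [ComplementedLattice L]
    (hgt : L → ℤ) (hgt_bot : hgt ⊥ = 0)
    (hgt_cov : ∀ a b : L, a ⋖ b → hgt b = hgt a + 1)
    (ρ : L → ℤ) (hρ_bot : ρ ⊥ = 0)
    (hsub : ∀ a b : L, ρ (a ⊔ b) + ρ (a ⊓ b) ≤ ρ a + ρ b)
    (hbi : ∀ a b : L, a ≤ b → 0 ≤ ρ b - ρ a ∧ ρ b - ρ a ≤ hgt b - hgt a)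
    (M I : L) (hIM : I ≤ M) (hI : ρ I = hgt I)
    (hmax : ∀ J : L, I ≤ J → J ≤ M → ρ J = hgt J → J = I) :
    ρ M = ρ I := by
  by_contra hne
  have hge : ρ I ≤ ρ M := by have := (hbi I M hIM).1; omega
  have hMgt : ρ I < ρ M := lt_of_le_of_ne hge (fun h => hne h.symm)
  -- pick a minimal x with I ≤ x ≤ M and ρ I < ρ x
  have : ∃ x ∈ {x : L | I ≤ x ∧ x ≤ M ∧ ρ I < ρ x},
      ∀ y ∈ {x : L | I ≤ x ∧ x ≤ M ∧ ρ I < ρ x}, ¬ y < x := by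
    apply wellFounded_lt.has_min
    exact ⟨M, hIM, le_rfl, hMgt⟩
  obtain ⟨x, ⟨hIx, hxM, hρx⟩, hxmin⟩ := this
  have hIltx : I < x := by
    rcases lt_or_eq_of_le hIx with h | h
    · exact h
    · exact absurd hρx (by rw [← h]; omega)
  -- pick J minimal with I < J ≤ x ; it covers I
  have : ∃ J ∈ {y : L | I < y ∧ y ≤ x},
      ∀ y ∈ {y : L | I < y ∧ y ≤ x}, ¬ y < J := by
    apply wellFounded_lt.has_min
    exact ⟨x, hIltx, le_rfl⟩
  obtain ⟨J, ⟨hIJ, hJx⟩, hJmin⟩ := this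
  have hcov : I ⋖ J := ⟨hIJ, fun z hIz hzJ => hJmin z ⟨hIz, hzJ.le.trans hJx⟩ hzJ⟩
  -- relative complement z of J in [I, x]
  obtain ⟨z, hIz, hzx, hinf, hsupx⟩ := exists_rel_compl hIJ.le hJx
  have hzltx : z < x := by
    rcases lt_or_eq_of_le hzx with h | h
    · exact h
    · exfalso
      rw [h] at hinf
      rw [inf_eq_left.mpr hJx] at hinf
      exact hIJ.ne' hinf
  have hρz : ρ z ≤ ρ I := by
    by_contra hz
    exact hxmin z ⟨hIz, hzx.trans hxM, by omega⟩ hzltx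
  -- submodularity forces ρ J > ρ I
  have hsubJz := hsub J z
  rw [hsupx, hinf] at hsubJz
  have hρJ : ρ I < ρ J := by omega
  -- but then J is independent, contradicting maximality
  have hbiJ := (hbi I J hIJ.le).2
  have hgtJ := hgt_cov I J hcov
  have : ρ J = hgt J := by omega
  exact hIJ.ne' (hmax J hIJ.le (hJx.trans hxM) this)
end

section
/- Let L be a finite complemented modular lattice with height function hgt and consider a ℤ-latroid (ρ, hgt, L). If I1, I2 are independent elements (ρ(I)=hgt(I)) with hgt(I2) < hgt(I1), then there exists an atom J ≤ I1 such that J is not below I2 and I2 ∨ J is independent. -/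
/-- Independence augmentation for `ℤ`-latroids on finite complemented modular
lattices: if `I1, I2` are independent with `hgt I2 < hgt I1`, there is an atom
`J ≤ I1` with `¬ J ≤ I2` such that `I2 ⊔ J` is independent. -/
theorem latroid_independence_augmentation
    {L : Type*} [Lattice L] [BoundedOrder L] [Fintype L]
    [IsModularLattice L] [ComplementedLattice L]
    (hgt : L → ℤ) (hgt_bot : hgt ⊥ = 0)
    (hgt_cov : ∀ a b : L, a ⋖ b → hgt b = hgt a + 1)
    (ρ : L → ℤ) (hρ_bot : ρ ⊥ = 0)
    (hsub : ∀ a b : L, ρ (a ⊔ b) + ρ (a ⊓ b) ≤ ρ a + ρ b)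
    (hbi : ∀ a b : L, a ≤ b → 0 ≤ ρ b - ρ a ∧ ρ b - ρ a ≤ hgt b - hgt a)
    (I1 I2 : L) (hI1 : ρ I1 = hgt I1) (hI2 : ρ I2 = hgt I2)
    (hlt : hgt I2 < hgt I1) :
    ∃ J : L, IsAtom J ∧ J ≤ I1 ∧ ¬ J ≤ I2 ∧ ρ (I2 ⊔ J) = hgt (I2 ⊔ J) := by
  by_contra h
  push_neg at h
  have hmono : ∀ a b : L, a ≤ b → ρ a ≤ ρ b := fun a b hab => by
    have := (hbi a b hab).1; linarith
  -- Step A: for every atom J ≤ I1, joining J to I2 does not increase ρ.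
  have stepA : ∀ J : L, IsAtom J → J ≤ I1 → ρ (I2 ⊔ J) = ρ I2 := by
    intro J hJ hJ1
    by_cases hJ2 : J ≤ I2
    · rw [sup_eq_left.2 hJ2]
    · have hne := h J hJ hJ1 hJ2
      have hdisj : J ⊓ I2 = ⊥ := by
        rcases hJ.le_iff.1 inf_le_left with h1 | h1
        · exact h1
        · exact absurd (h1 ▸ inf_le_right) hJ2
      have hcov : J ⊓ I2 ⋖ J := hdisj ▸ hJ.bot_covBy
      have hcov2 : I2 ⋖ J ⊔ I2 := covBy_sup_of_inf_covBy_left hcov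
      rw [sup_comm] at hcov2
      have hh : hgt (I2 ⊔ J) = hgt I2 + 1 := hgt_cov _ _ hcov2
      have h1 := hbi I2 (I2 ⊔ J) le_sup_left
      omega
  -- Step B: for every x ≤ I1, joining x to I2 does not increase ρ.
  have stepB : ∀ x : L, x ≤ I1 → ρ (I2 ⊔ x) = ρ I2 := by
    intro x
    induction x using WellFoundedLT.induction with
    | _ x ih =>
      intro hx1
      rcases eq_or_ne x ⊥ with rfl | hxbot
      · rw [sup_bot_eq]
      · obtain ⟨J, hJ, hJx⟩ := (eq_bot_or_exists_atom_le x).resolve_left hxbot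
        -- complement of J inside the interval [⊥, x]
        obtain ⟨⟨y, hyx⟩, hy⟩ := exists_isCompl (α := Set.Iic x) ⟨J, hJx⟩
        have hyx' : y ≤ x := hyx
        have hinf : y ⊓ J = ⊥ := by
          have h0 : ((⟨J, hJx⟩ ⊓ ⟨y, hyx⟩ : Set.Iic x)) = ⊥ := hy.inf_eq_bot
          have := congrArg Subtype.val h0
          simpa [inf_comm] using this
        have hsup : y ⊔ J = x := by
          have h0 : ((⟨J, hJx⟩ ⊔ ⟨y, hyx⟩ : Set.Iic x)) = ⊤ := hy.sup_eq_top
          have := congrArg Subtype.val h0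
          simpa [sup_comm] using this
        have hylt : y < x := by
          rcases lt_or_eq_of_le hyx' with h' | rfl
          · exact h'
          · exfalso
            have hJy : J ≤ y := hJx
            have : J = ⊥ := by rw [← hinf, inf_eq_right.2 hJy]
            exact hJ.1 this
        have hy' : ρ (I2 ⊔ y) = ρ I2 := ih y hylt (le_trans hyx' hx1)
        have hJ' : ρ (I2 ⊔ J) = ρ I2 := stepA J hJ (le_trans hJx hx1)
        have hkey := hsub (I2 ⊔ y) (I2 ⊔ J)
        have he : (I2 ⊔ y) ⊔ (I2 ⊔ J) = I2 ⊔ x := by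
          rw [← hsup, sup_sup_sup_comm, sup_idem]
        rw [he, hy', hJ'] at hkey
        have hge1 : ρ I2 ≤ ρ ((I2 ⊔ y) ⊓ (I2 ⊔ J)) :=
          hmono _ _ (le_inf le_sup_left le_sup_left)
        have hge2 : ρ I2 ≤ ρ (I2 ⊔ x) := hmono _ _ le_sup_left
        omega
  have hfin : ρ (I2 ⊔ I1) = ρ I2 := stepB I1 le_rfl
  have : ρ I1 ≤ ρ (I2 ⊔ I1) := hmono _ _ le_sup_right
  omega
end

section
/- Let L be a finite complemented modular lattice with height function hgt, and let C be the set of circuits of a ℤ-latroid (ρ, hgt, L). If C1, C2 ∈ C are distinct and M ≤ C1 ∨ C2 with hgt(M) = hgt(C1 ∨ C2) − 1, then there exists C3 ∈ C with C3 ≤ M. -/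
/-!
Since `x ↦ hgt x - hgt (x ⊓ w)` does not decrease along covers of a lower modular lattice, the
height is supermodular: `hgt a + hgt b ≤ hgt (a ⊔ b) + hgt (a ⊓ b)`. For distinct circuits the meet
lies strictly below one of them and so has full rank; submodularity of `ρ` then forces
`ρ (C1 ⊔ C2) ≤ hgt (C1 ⊔ C2) - 2`, hence `ρ M < hgt M`, and a minimal element below `M` with
`ρ < hgt` is a circuit.
-/

theorem CovBy.inf_eq_or_covBy_inf {α : Type*} [Lattice α] [IsLowerModularLattice α] {x y : α}
    (h : x ⋖ y) (w : α) : x ⊓ w = y ⊓ w ∨ x ⊓ w ⋖ y ⊓ w := by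
  rcases h.eq_or_eq (le_sup_left : x ≤ x ⊔ y ⊓ w) (sup_le h.le inf_le_left) with hx | hy
  · exact .inl <| le_antisymm (inf_le_inf_right w h.le) (le_inf (sup_eq_left.mp hx) inf_le_right)
  · have hcov : x ⊓ (y ⊓ w) ⋖ y ⊓ w := inf_covBy_of_covBy_sup_left (hy.symm ▸ h)
    rw [← inf_assoc, inf_eq_left.mpr h.le] at hcov
    exact .inr hcov

section Height

variable {L : Type*} [Lattice L] [IsLowerModularLattice L] [LocallyFiniteOrder L] {hgt : L → ℤ}

theorem monotone_hgt_sub_hgt_inf (hgt_cov : ∀ a b : L, a ⋖ b → hgt b = hgt a + 1) (w : L) :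
    Monotone fun x ↦ hgt x - hgt (x ⊓ w) := by
  refine (monotone_iff_forall_covBy _).2 fun x y hxy ↦ ?_
  rcases hxy.inf_eq_or_covBy_inf w with heq | hcov
  · simp only [heq, hgt_cov x y hxy]
    omega
  · simp only [hgt_cov _ _ hcov, hgt_cov x y hxy]
    omega

theorem hgt_add_le_sup_add_inf (hgt_cov : ∀ a b : L, a ⋖ b → hgt b = hgt a + 1) (a b : L) :
    hgt a + hgt b ≤ hgt (a ⊔ b) + hgt (a ⊓ b) := by
  have h := monotone_hgt_sub_hgt_inf hgt_cov a (le_sup_right : b ≤ a ⊔ b)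
  simp only [inf_eq_right.mpr (le_sup_left : a ≤ a ⊔ b), inf_comm b a] at h
  omega

end Height

section Circuit

variable {L : Type*} [Lattice L] {ρ hgt : L → ℤ}

def IsLatroidCircuit (ρ hgt : L → ℤ) (C : L) : Prop :=
  ρ C < hgt C ∧ ∀ L' : L, L' < C → ρ L' = hgt L'

theorem IsLatroidCircuit.rank_inf {C1 C2 : L} (hC1 : IsLatroidCircuit ρ hgt C1)
    (hC2 : IsLatroidCircuit ρ hgt C2) (hne : C1 ≠ C2) : ρ (C1 ⊓ C2) = hgt (C1 ⊓ C2) :=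
  (inf_lt_left_or_right hne).elim (hC1.2 _) (hC2.2 _)

theorem IsLatroidCircuit.rank_sup_add_two_le [IsLowerModularLattice L] [LocallyFiniteOrder L]
    (hgt_cov : ∀ a b : L, a ⋖ b → hgt b = hgt a + 1)
    (hsub : ∀ a b : L, ρ (a ⊔ b) + ρ (a ⊓ b) ≤ ρ a + ρ b) {C1 C2 : L}
    (hC1 : IsLatroidCircuit ρ hgt C1) (hC2 : IsLatroidCircuit ρ hgt C2) (hne : C1 ≠ C2) :
    ρ (C1 ⊔ C2) + 2 ≤ hgt (C1 ⊔ C2) := by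
  have := hC1.rank_inf hC2 hne
  linarith [hsub C1 C2, hgt_add_le_sup_add_inf hgt_cov C1 C2, hC1.1, hC2.1]

theorem exists_isLatroidCircuit_le [WellFoundedLT L] (hρ_le : ∀ x, ρ x ≤ hgt x) {M : L}
    (hM : ρ M < hgt M) : ∃ C, IsLatroidCircuit ρ hgt C ∧ C ≤ M := by
  obtain ⟨C, hCM, hC, hmin⟩ := exists_minimal_le_of_wellFoundedLT (fun x ↦ ρ x < hgt x) M hM
  refine ⟨C, ⟨hC, fun L' hL' ↦ ?_⟩, hCM⟩
  exact le_antisymm (hρ_le L') (not_lt.mp fun h ↦ hL'.not_ge (hmin h hL'.le))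

end Circuit

theorem latroid_circuit_elimination_general
    {L : Type*} [Lattice L] [BoundedOrder L] [Fintype L]
    [IsModularLattice L]
    (hgt : L → ℤ) (hgt_bot : hgt ⊥ = 0)
    (hgt_cov : ∀ a b : L, a ⋖ b → hgt b = hgt a + 1)
    (ρ : L → ℤ) (hρ_bot : ρ ⊥ = 0)
    (hsub : ∀ a b : L, ρ (a ⊔ b) + ρ (a ⊓ b) ≤ ρ a + ρ b)
    (hbi : ∀ a b : L, a ≤ b → 0 ≤ ρ b - ρ a ∧ ρ b - ρ a ≤ hgt b - hgt a)
    (C1 C2 M : L)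
    (hC1 : ρ C1 < hgt C1 ∧ ∀ L' : L, L' < C1 → ρ L' = hgt L')
    (hC2 : ρ C2 < hgt C2 ∧ ∀ L' : L, L' < C2 → ρ L' = hgt L')
    (hne : C1 ≠ C2) (hM : M ≤ C1 ⊔ C2) (hhgt : hgt M = hgt (C1 ⊔ C2) - 1) :
    ∃ C3 : L, (ρ C3 < hgt C3 ∧ ∀ L' : L, L' < C3 → ρ L' = hgt L') ∧ C3 ≤ M := by
  classical
  let := Fintype.toLocallyFiniteOrder (α := L)
  have hρ_le : ∀ x, ρ x ≤ hgt x := fun x ↦ by linarith [(hbi ⊥ x bot_le).2]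
  have hρ_sup := IsLatroidCircuit.rank_sup_add_two_le hgt_cov hsub hC1 hC2 hne
  have hρ_mono := (hbi M _ hM).1
  exact exists_isLatroidCircuit_le hρ_le (by omega)

/-- Circuit elimination for `ℤ`-latroids: if `C1 ≠ C2` are circuits and
`M ≤ C1 ⊔ C2` with `hgt M = hgt (C1 ⊔ C2) - 1`, then some circuit `C3 ≤ M`. -/
theorem latroid_circuit_elimination
    {L : Type*} [Lattice L] [BoundedOrder L] [Fintype L]
    [IsModularLattice L] [ComplementedLattice L]
    (hgt : L → ℤ) (hgt_bot : hgt ⊥ = 0)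
    (hgt_cov : ∀ a b : L, a ⋖ b → hgt b = hgt a + 1)
    (ρ : L → ℤ) (hρ_bot : ρ ⊥ = 0)
    (hsub : ∀ a b : L, ρ (a ⊔ b) + ρ (a ⊓ b) ≤ ρ a + ρ b)
    (hbi : ∀ a b : L, a ≤ b → 0 ≤ ρ b - ρ a ∧ ρ b - ρ a ≤ hgt b - hgt a)
    (C1 C2 M : L)
    (hC1 : ρ C1 < hgt C1 ∧ ∀ L' : L, L' < C1 → ρ L' = hgt L')
    (hC2 : ρ C2 < hgt C2 ∧ ∀ L' : L, L' < C2 → ρ L' = hgt L')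
    (hne : C1 ≠ C2) (hM : M ≤ C1 ⊔ C2) (hhgt : hgt M = hgt (C1 ⊔ C2) - 1) :
    ∃ C3 : L, (ρ C3 < hgt C3 ∧ ∀ L' : L, L' < C3 → ρ L' = hgt L') ∧ C3 ≤ M :=
  latroid_circuit_elimination_general hgt hgt_bot hgt_cov ρ hρ_bot hsub hbi C1 C2 M hC1 hC2 hne hM
    hhgt
end

section
/- The dual of a latroid is a latroid: if (ρ, ‖·‖, L) is an A-latroid on a finite modular lattice L, then the functions ‖L⊥‖⊥ = ‖1‖ − ‖L‖ and ρ⊥(L⊥) = ‖L⊥‖⊥ − ρ(1) + ρ(L) on the order-dual lattice L⊥ satisfy the latroid axioms, and the double dual equals the original latroid. -/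
/-- The axioms of an `A`-latroid `(ρ, ‖·‖, L)` on a finite modular lattice. -/
def IsLatroid {A L : Type*} [AddCommGroup A] [PartialOrder A] [IsOrderedAddMonoid A] [Lattice L] [BoundedOrder L]
    (ρ nrm : L → A) : Prop :=
  ρ ⊥ = 0 ∧ nrm ⊥ = 0 ∧
  (∀ a b : L, a < b → nrm a < nrm b) ∧
  (∀ a b : L, nrm a + nrm b = nrm (a ⊔ b) + nrm (a ⊓ b)) ∧
  (∀ a b : L, a < b → 0 ≤ ρ b - ρ a ∧ ρ b - ρ a ≤ nrm b - nrm a) ∧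
  (∀ a b : L, ρ (a ⊔ b) + ρ (a ⊓ b) ≤ ρ a + ρ b)

/-- The dual length function on the order-dual lattice. -/
def dualNrm {A L : Type*} [AddCommGroup A] [PartialOrder A] [IsOrderedAddMonoid A] [Lattice L] [BoundedOrder L]
    (nrm : L → A) : Lᵒᵈ → A :=
  fun x => nrm ⊤ - nrm (OrderDual.ofDual x)

/-- The dual rank function on the order-dual lattice. -/
def dualRho {A L : Type*} [AddCommGroup A] [PartialOrder A] [IsOrderedAddMonoid A] [Lattice L] [BoundedOrder L]
    (ρ nrm : L → A) : Lᵒᵈ → A :=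
  fun x => dualNrm nrm x - ρ ⊤ + ρ (OrderDual.ofDual x)

/-!
Writing `x'` for `x : Lᵒᵈ` read in `L`, the dual rank is
`ρ⊥ x = (‖⊤‖ - ρ ⊤) - (‖x'‖ - ρ x')`, and increments along `a < b` in `Lᵒᵈ` become
`Δρ⊥ = Δ‖·‖ - Δρ` and `Δ‖·‖⊥ = Δ‖·‖` along `b' < a'` in `L`. So the bounds `0 ≤ Δρ ≤ Δ‖·‖`
swap roles, and since `‖·‖` is modular and `ρ` submodular, `‖·‖ - ρ` is supermodular, which
is submodularity of `ρ⊥` once `⊔` and `⊓` are exchanged.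
-/

open OrderDual

section Dual

variable {A L : Type*} [AddCommGroup A] [PartialOrder A] [IsOrderedAddMonoid A]
  [Lattice L] [BoundedOrder L]

theorem dualNrm_bot (nrm : L → A) : dualNrm nrm ⊥ = 0 :=
  sub_self _

theorem dualRho_bot (ρ nrm : L → A) : dualRho ρ nrm ⊥ = 0 := by
  simp [dualRho, dualNrm_bot]

theorem dualRho_eq (ρ nrm : L → A) (x : Lᵒᵈ) :
    dualRho ρ nrm x = (nrm ⊤ - ρ ⊤) - (nrm (ofDual x) - ρ (ofDual x)) := by
  unfold dualRho dualNrm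
  abel

theorem dualNrm_sub_dualNrm (nrm : L → A) (a b : Lᵒᵈ) :
    dualNrm nrm b - dualNrm nrm a = nrm (ofDual a) - nrm (ofDual b) :=
  sub_sub_sub_cancel_left _ _ _

theorem dualRho_sub_dualRho (ρ nrm : L → A) (a b : Lᵒᵈ) :
    dualRho ρ nrm b - dualRho ρ nrm a =
      (nrm (ofDual a) - nrm (ofDual b)) - (ρ (ofDual a) - ρ (ofDual b)) := by
  rw [dualRho_eq, dualRho_eq]
  abel

theorem dualNrm_add_dualNrm {nrm : L → A}
    (hmod : ∀ a b : L, nrm a + nrm b = nrm (a ⊔ b) + nrm (a ⊓ b)) (a b : Lᵒᵈ) :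
    dualNrm nrm a + dualNrm nrm b = dualNrm nrm (a ⊔ b) + dualNrm nrm (a ⊓ b) := by
  unfold dualNrm
  rw [sub_add_sub_comm, sub_add_sub_comm, ofDual_sup, ofDual_inf, hmod (ofDual a) (ofDual b),
    add_comm (nrm (_ ⊔ _))]

theorem dualRho_sup_add_inf {ρ nrm : L → A}
    (hmod : ∀ a b : L, nrm a + nrm b = nrm (a ⊔ b) + nrm (a ⊓ b))
    (hsub : ∀ a b : L, ρ (a ⊔ b) + ρ (a ⊓ b) ≤ ρ a + ρ b) (a b : Lᵒᵈ) :
    dualRho ρ nrm (a ⊔ b) + dualRho ρ nrm (a ⊓ b) ≤ dualRho ρ nrm a + dualRho ρ nrm b := by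
  have hsuper : nrm (ofDual a) + nrm (ofDual b) - (ρ (ofDual a) + ρ (ofDual b)) ≤
      nrm (ofDual a ⊓ ofDual b) + nrm (ofDual a ⊔ ofDual b) -
        (ρ (ofDual a ⊓ ofDual b) + ρ (ofDual a ⊔ ofDual b)) := by
    rw [hmod (ofDual a) (ofDual b), add_comm (nrm (_ ⊓ _)), add_comm (ρ (_ ⊓ _))]
    exact sub_le_sub_left (hsub _ _) _
  simp only [dualRho_eq, ofDual_sup, ofDual_inf, sub_add_sub_comm, sub_le_sub_iff_left]
  exact hsuper

theorem IsLatroid.dual {ρ nrm : L → A} (h : IsLatroid ρ nrm) :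
    IsLatroid (dualRho ρ nrm) (dualNrm nrm) := by
  obtain ⟨-, -, hmono, hmod, hstep, hsub⟩ := h
  refine ⟨dualRho_bot ρ nrm, dualNrm_bot nrm, fun a b hab => ?_, dualNrm_add_dualNrm hmod,
    fun a b hab => ?_, dualRho_sup_add_inf hmod hsub⟩
  · exact sub_lt_sub_left (hmono _ _ hab) _
  · obtain ⟨hρ_nonneg, hρ_le⟩ := hstep _ _ hab
    rw [dualRho_sub_dualRho, dualNrm_sub_dualNrm]
    exact ⟨sub_nonneg.mpr hρ_le, sub_le_self _ hρ_nonneg⟩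

theorem dualNrm_dualNrm {nrm : L → A} (hn : nrm ⊥ = 0) (x : L) :
    dualNrm (dualNrm nrm) (toDual (toDual x)) = nrm x := by
  simp [dualNrm, hn]

theorem dualRho_dualRho {ρ nrm : L → A} (hρ : ρ ⊥ = 0) (hn : nrm ⊥ = 0) (x : L) :
    dualRho (dualRho ρ nrm) (dualNrm nrm) (toDual (toDual x)) = ρ x := by
  simp only [dualRho_eq, dualNrm, ofDual_toDual, ofDual_top, hρ, hn]
  abel

end Dual

theorem latroid_dual_general
    {A L : Type*} [AddCommGroup A] [PartialOrder A] [IsOrderedAddMonoid A]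
    [Lattice L] [BoundedOrder L]
    (ρ nrm : L → A) (h : IsLatroid ρ nrm) :
    IsLatroid (dualRho ρ nrm) (dualNrm nrm) ∧
    (∀ x : L,
      dualRho (dualRho ρ nrm) (dualNrm nrm) (OrderDual.toDual (OrderDual.toDual x))
        = ρ x ∧
      dualNrm (dualNrm nrm) (OrderDual.toDual (OrderDual.toDual x)) = nrm x) :=
  ⟨h.dual, fun x => ⟨dualRho_dualRho h.1 h.2.1 x, dualNrm_dualNrm h.2.1 x⟩⟩

/-- The dual of a latroid is a latroid, and the double dual is the original latroid. -/
theorem latroid_dual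
    {A L : Type*} [AddCommGroup A] [PartialOrder A] [IsOrderedAddMonoid A]
    [Lattice L] [BoundedOrder L] [Fintype L] [IsModularLattice L]
    (ρ nrm : L → A) (h : IsLatroid ρ nrm) :
    IsLatroid (dualRho ρ nrm) (dualNrm nrm) ∧
    (∀ x : L,
      dualRho (dualRho ρ nrm) (dualNrm nrm) (OrderDual.toDual (OrderDual.toDual x))
        = ρ x ∧
      dualNrm (dualNrm nrm) (OrderDual.toDual (OrderDual.toDual x)) = nrm x) :=
  latroid_dual_general ρ nrm h
end

section
/- Let R be a finite commutative ring, L a sublattice of the lattice of R-submodules of R^n (with sum as join and intersection as meet), ‖·‖ : L → A a strictly increasing modular function with ‖0‖=0, and C ⊆ R^n a submodule. Then ρ_C(M) = ‖M‖ − ‖M ∩ C‖ is bounded increasing and submodular, i.e., (ρ_C, ‖·‖, L) is an A-latroid. -/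
/-!
Modularity of `‖·‖` applied to the pair `M₁ ⊓ C, M₂ ⊓ C` rewrites `‖M₁ ∩ C‖ + ‖M₂ ∩ C‖` as
`‖(M₁ ∩ C) + (M₂ ∩ C)‖ + ‖M₁ ∩ M₂ ∩ C‖`, and `(M₁ ∩ C) + (M₂ ∩ C) ⊆ (M₁ + M₂) ∩ C` with
monotonicity bounds this by `‖(M₁ + M₂) ∩ C‖ + ‖M₁ ∩ M₂ ∩ C‖`. Subtracting from the modular
identity for `M₁, M₂` gives submodularity of `ρ_C`; the same argument for `M₁ ≤ M₂` and the pair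
`M₁, M₂ ⊓ C` gives monotonicity, and the bound `ρ_C(M₂) - ρ_C(M₁) ≤ ‖M₂‖ - ‖M₁‖` is just
monotonicity of `M ↦ ‖M ∩ C‖`.
-/

section ModularFunction

variable {α A : Type*} [Lattice α] [AddCommGroup A] [PartialOrder A] [IsOrderedAddMonoid A]
  {f : α → A}

theorem add_inf_le_add_inf_of_le (hf : Monotone f)
    (hmod : ∀ a b, f a + f b = f (a ⊔ b) + f (a ⊓ b)) {a b : α} (hab : a ≤ b) (c : α) :
    f a + f (b ⊓ c) ≤ f b + f (a ⊓ c) := by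
  have hinf : a ⊓ (b ⊓ c) = a ⊓ c := by rw [← inf_assoc, inf_eq_left.2 hab]
  rw [hmod, hinf]
  exact add_le_add_left (hf (sup_le hab inf_le_left)) _

theorem inf_add_inf_le_sup_inf_add_inf_inf (hf : Monotone f)
    (hmod : ∀ a b, f a + f b = f (a ⊔ b) + f (a ⊓ b)) (a b c : α) :
    f (a ⊓ c) + f (b ⊓ c) ≤ f ((a ⊔ b) ⊓ c) + f (a ⊓ b ⊓ c) := by
  rw [hmod, inf_inf_inf_comm, inf_idem]
  exact add_le_add_left (hf (sup_le (inf_le_inf_right c le_sup_left)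
    (inf_le_inf_right c le_sup_right))) _

end ModularFunction

theorem code_latroid_general
    {A : Type*} [AddCommGroup A] [PartialOrder A] [IsOrderedAddMonoid A]
    {R : Type*} [CommRing R] (n : ℕ)
    (S : Set (Submodule R (Fin n → R)))
    (nrm : Submodule R (Fin n → R) → A)
    (hstrict : ∀ M1 M2 : Submodule R (Fin n → R), M1 < M2 → nrm M1 < nrm M2)
    (hmod : ∀ M1 M2 : Submodule R (Fin n → R),
      nrm M1 + nrm M2 = nrm (M1 ⊔ M2) + nrm (M1 ⊓ M2))
    (C : Submodule R (Fin n → R)) :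
    (∀ M1 ∈ S, ∀ M2 ∈ S, M1 < M2 →
      0 ≤ (nrm M2 - nrm (M2 ⊓ C)) - (nrm M1 - nrm (M1 ⊓ C)) ∧
      (nrm M2 - nrm (M2 ⊓ C)) - (nrm M1 - nrm (M1 ⊓ C)) ≤ nrm M2 - nrm M1) ∧
    (∀ M1 ∈ S, ∀ M2 ∈ S,
      (nrm (M1 ⊔ M2) - nrm ((M1 ⊔ M2) ⊓ C)) + (nrm (M1 ⊓ M2) - nrm ((M1 ⊓ M2) ⊓ C))
        ≤ (nrm M1 - nrm (M1 ⊓ C)) + (nrm M2 - nrm (M2 ⊓ C))) := by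
  have hmono : Monotone nrm := StrictMono.monotone fun _ _ h => hstrict _ _ h
  refine ⟨fun M1 _ M2 _ hlt => ⟨?_, ?_⟩, fun M1 _ M2 _ => ?_⟩
  · rw [sub_nonneg, sub_le_sub_iff]
    exact add_inf_le_add_inf_of_le hmono hmod hlt.le C
  · rw [sub_sub_sub_comm, sub_le_self_iff, sub_nonneg]
    exact hmono (inf_le_inf_right C hlt.le)
  · rw [sub_add_sub_comm, sub_add_sub_comm, ← hmod]
    exact sub_le_sub_left (inf_add_inf_le_sup_inf_add_inf_inf hmono hmod M1 M2 C) _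

/-- For a sublattice `S` of the lattice of submodules of `R^n` (join is sum, meet is
intersection), a strictly increasing modular function `nrm` with `nrm ⊥ = 0`, and a
code `C ⊆ R^n`, the function `ρ_C(M) = nrm M - nrm (M ⊓ C)` is bounded increasing and
submodular, i.e. `(ρ_C, nrm, S)` is an `A`-latroid. -/
theorem code_latroid
    {A : Type*} [AddCommGroup A] [PartialOrder A] [IsOrderedAddMonoid A]
    {R : Type*} [CommRing R] [Fintype R] (n : ℕ)
    (S : Set (Submodule R (Fin n → R)))
    (hS_sup : ∀ M1 ∈ S, ∀ M2 ∈ S, M1 ⊔ M2 ∈ S)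
    (hS_inf : ∀ M1 ∈ S, ∀ M2 ∈ S, M1 ⊓ M2 ∈ S)
    (nrm : Submodule R (Fin n → R) → A) (hbot : nrm ⊥ = 0)
    (hstrict : ∀ M1 M2 : Submodule R (Fin n → R), M1 < M2 → nrm M1 < nrm M2)
    (hmod : ∀ M1 M2 : Submodule R (Fin n → R),
      nrm M1 + nrm M2 = nrm (M1 ⊔ M2) + nrm (M1 ⊓ M2))
    (C : Submodule R (Fin n → R)) :
    (∀ M1 ∈ S, ∀ M2 ∈ S, M1 < M2 →
      0 ≤ (nrm M2 - nrm (M2 ⊓ C)) - (nrm M1 - nrm (M1 ⊓ C)) ∧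
      (nrm M2 - nrm (M2 ⊓ C)) - (nrm M1 - nrm (M1 ⊓ C)) ≤ nrm M2 - nrm M1) ∧
    (∀ M1 ∈ S, ∀ M2 ∈ S,
      (nrm (M1 ⊔ M2) - nrm ((M1 ⊔ M2) ⊓ C)) + (nrm (M1 ⊓ M2) - nrm ((M1 ⊓ M2) ⊓ C))
        ≤ (nrm M1 - nrm (M1 ⊓ C)) + (nrm M2 - nrm (M2 ⊓ C))) :=
  code_latroid_general n S nrm hstrict hmod C
end

section
/- For subspaces V1 ≤ V2 of F_q^n and a rank-metric code C ⊆ M(m×n, F_q), one has dim(C(V2)) ≤ dim(C(V1)) + m·(dim(V2) − dim(V1)), where C(V) is the subcode of matrices with row space contained in V. -/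
set_option synthInstance.maxHeartbeats 400000
set_option maxHeartbeats 800000


/-- The submodule of `m × n` matrices whose row space is contained in `V`. -/
def rowSpaceIn {F : Type*} [Field F] {m n : ℕ}
    (V : Submodule F (Fin n → F)) : Submodule F (Matrix (Fin m) (Fin n) F) where
  carrier := {A | ∀ i, A i ∈ V}
  add_mem' := fun hA hB i => V.add_mem (hA i) (hB i)
  zero_mem' := fun _ => V.zero_mem
  smul_mem' := fun c _ hA i => V.smul_mem c (hA i)

/-- For `V1 ≤ V2`, `dim C(V2) ≤ dim C(V1) + m·(dim V2 − dim V1)`. -/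
theorem dim_subcode_le
    {F : Type*} [Field F] [Fintype F] (m n : ℕ)
    (C : Submodule F (Matrix (Fin m) (Fin n) F))
    (V1 V2 : Submodule F (Fin n → F)) (h : V1 ≤ V2) :
    (Module.finrank F ↥(C ⊓ rowSpaceIn V2) : ℤ)
      ≤ (Module.finrank F ↥(C ⊓ rowSpaceIn V1) : ℤ)
        + m * ((Module.finrank F V2 : ℤ) - (Module.finrank F V1 : ℤ)) := by
  classical
  set W1 := C ⊓ rowSpaceIn V1 with hW1def
  set W2 := C ⊓ rowSpaceIn (m := m) V2 with hW2def
  have hW : W1 ≤ W2 := inf_le_inf_left C (fun A hA i => h (hA i))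
  set U : Submodule F ((Fin n → F) ⧸ V1) := V2.map V1.mkQ with hUdef
  -- the map sending a matrix to its rows mod V1
  let φ : ↥W2 →ₗ[F] (Fin m → ↥U) :=
    { toFun := fun A i => ⟨V1.mkQ (A.1 i), ⟨A.1 i, A.2.2 i, rfl⟩⟩
      map_add' := by
        intro A B; funext i; ext
        show V1.mkQ (A.1 i + B.1 i) = V1.mkQ (A.1 i) + V1.mkQ (B.1 i)
        simp
      map_smul' := by
        intro c A; funext i; ext
        show V1.mkQ (c • A.1 i) = c • V1.mkQ (A.1 i)
        simp }
  have hker : LinearMap.ker φ = W1.comap W2.subtype := by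
    ext A
    constructor
    · intro hA
      refine ⟨A.2.1, fun i => ?_⟩
      have := congrFun hA i
      have h0 : V1.mkQ (A.1 i) = 0 := congrArg Subtype.val this
      simpa [Submodule.Quotient.mk_eq_zero] using h0
    · intro hA
      funext i
      ext
      simpa [φ, Submodule.Quotient.mk_eq_zero] using hA.2 i
  have hrank := LinearMap.finrank_range_add_finrank_ker φ
  have hkerrank : Module.finrank F ↥(LinearMap.ker φ) = Module.finrank F ↥W1 := by
    rw [hker]
    exact LinearEquiv.finrank_eq (Submodule.comapSubtypeEquivOfLe hW)
  have hrange : Module.finrank F ↥(LinearMap.range φ) ≤ m * Module.finrank F ↥U := by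
    have h1 : Module.finrank F ↥(LinearMap.range φ) ≤ Module.finrank F (Fin m → ↥U) :=
      (LinearMap.range φ).finrank_le
    have h2 : Module.finrank F (Fin m → ↥U) = m * Module.finrank F ↥U := by
      rw [Module.finrank_pi_fintype]
      simp [Finset.sum_const, mul_comm]
    omega
  have hkey : Module.finrank F ↥W2 ≤ Module.finrank F ↥W1 + m * Module.finrank F ↥U := by
    omega
  -- finrank U + finrank V1 = finrank V2
  have hU : Module.finrank F ↥U + Module.finrank F ↥V1 = Module.finrank F ↥V2 := by
    have hr := LinearMap.finrank_range_add_finrank_ker (V1.mkQ.domRestrict V2)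
    have hrange' : LinearMap.range (V1.mkQ.domRestrict V2) = U := by
      rw [LinearMap.range_domRestrict]
    have hker' : LinearMap.ker (V1.mkQ.domRestrict V2) = V1.comap V2.subtype := by
      ext x
      simp [LinearMap.mem_ker, Submodule.Quotient.mk_eq_zero]
    have hker2 : Module.finrank F ↥(LinearMap.ker (V1.mkQ.domRestrict V2))
        = Module.finrank F ↥V1 := by
      rw [hker']
      exact (Submodule.comapSubtypeEquivOfLe h).finrank_eq
    rw [hrange', hker2] at hr
    exact hr
  have hU' : (Module.finrank F ↥V2 : ℤ) - (Module.finrank F ↥V1 : ℤ)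
      = (Module.finrank F ↥U : ℤ) := by
    omega
  rw [hU']
  exact_mod_cast hkey
end

section
/- Let R be a finite chain ring, supp : R^n → ℤ^u a standard support, and M1, M2 submodules of R^n. Then supp(M1+M2) = supp(M1) ∨ supp(M2), and if M1, M2 are rectangular submodules, supp(M1∩M2) = supp(M1) ∧ supp(M2); hence supp restricted to rectangular submodules is a modular function: supp(M1)+supp(M2) = supp(M1+M2)+supp(M1∩M2). -/
/-! A standard support has finitely many values in each coordinate `j` (they depend only on
the entry at `π j`), so the supremum defining `suppMod` is taken over a finite nonempty set of
integers. Additivity of `supp` gives `suppMod (M₁ ⊔ M₂) = suppMod M₁ ⊔ suppMod M₂`. For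
rectangular `M₁ = ∏ Iᵢ`, `M₂ = ∏ Jᵢ`, the ideals of a chain ring are totally ordered, say
`I (π j) ≤ J (π j)`; then the vector of `M₁` carrying only its `π j`-entry lies in `M₁ ⊓ M₂` and
has the same `j`-th support, which gives the formula for the meet. Modularity is then
`min a b + max a b = a + b`. -/

/-- The support of a submodule: the coordinatewise join (supremum) of the supports
of its elements. -/
noncomputable def suppMod {R : Type*} [CommRing R] {n u : ℕ}
    (supp : (Fin n → R) → Fin u → ℤ) (M : Submodule R (Fin n → R)) : Fin u → ℤ :=
  fun j => sSup ((fun m => supp m j) '' (M : Set (Fin n → R)))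

/-- A rectangular submodule of `R^n` is a product of ideals `I1 × ⋯ × In`. -/
def IsRectangular {R : Type*} [CommRing R] {n : ℕ} (M : Submodule R (Fin n → R)) : Prop :=
  ∃ I : Fin n → Ideal R, M = Submodule.pi Set.univ I

theorem PreValuationRing.of_isLocalRing_of_isBezout {R : Type*} [CommRing R] [IsLocalRing R]
    [IsBezout R] : PreValuationRing R := by
  refine PreValuationRing.iff_dvd_total.mpr ⟨fun a b => ?_⟩
  obtain ⟨g, hg : _ = Ideal.span _⟩ := IsBezout.span_pair_isPrincipal a b
  obtain ⟨x, rfl⟩ := Ideal.mem_span_singleton'.mp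
    (show a ∈ Ideal.span {g} from hg ▸ Ideal.subset_span (by simp))
  obtain ⟨y, rfl⟩ := Ideal.mem_span_singleton'.mp
    (show b ∈ Ideal.span {g} from hg ▸ Ideal.subset_span (by simp))
  obtain ⟨s, t, hst⟩ := Ideal.mem_span_pair.mp
    (show g ∈ Ideal.span {x * g, y * g} from hg ▸ Ideal.subset_span (by simp))
  -- Either `s * x + t * y` is a unit, and then so is `x` or `y`, or `1 - (s * x + t * y)` is,
  -- and then `g = 0`.
  rcases IsLocalRing.isUnit_or_isUnit_of_add_one (add_sub_cancel (s * x + t * y) 1) with h | h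
  · rcases IsLocalRing.isUnit_or_isUnit_of_isUnit_add h with hx | hy
    · exact .inl (mul_dvd_mul_right (isUnit_iff_forall_dvd.mp (isUnit_of_mul_isUnit_right hx) _) _)
    · exact .inr (mul_dvd_mul_right (isUnit_iff_forall_dvd.mp (isUnit_of_mul_isUnit_right hy) _) _)
  · have hg0 : (1 - (s * x + t * y)) * g = 0 := by linear_combination -hst
    simp [h.mul_right_eq_zero.mp hg0]

theorem Ideal.le_total_of_isLocalRing_of_isBezout {R : Type*} [CommRing R] [IsLocalRing R]
    [IsBezout R] (I J : Ideal R) : I ≤ J ∨ J ≤ I :=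
  (PreValuationRing.iff_ideal_total.mp PreValuationRing.of_isLocalRing_of_isBezout).total I J

theorem Submodule.single_mem_pi_inf_pi {R : Type*} [Semiring R] {ι : Type*} [DecidableEq ι]
    {I J : ι → Ideal R} {i : ι} (hIJ : I i ≤ J i) {m : ι → R} (hm : m ∈ pi Set.univ I) :
    Pi.single i (m i) ∈ pi Set.univ I ⊓ pi Set.univ J := by
  have hmi : m i ∈ I i := mem_pi.mp hm i trivial
  exact ⟨le_comap_single_pi I hmi, le_comap_single_pi J (hIJ hmi)⟩

section StandardSupport

variable {R : Type*} [CommRing R] {n u : ℕ}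

def IsStandardSupport (supp : (Fin n → R) → Fin u → ℤ) (π : Fin u → Fin n) : Prop :=
  ∀ (v w : Fin n → R) (j : Fin u), v (π j) = w (π j) → supp v j = supp w j

namespace IsStandardSupport

variable [Finite R] {supp : (Fin n → R) → Fin u → ℤ} {π : Fin u → Fin n}
  (hstd : IsStandardSupport supp π)
include hstd

theorem bddAbove_image (M : Submodule R (Fin n → R)) (j : Fin u) :
    BddAbove ((fun m => supp m j) '' (M : Set (Fin n → R))) := by
  refine ((Set.finite_range fun r : R => supp (fun _ => r) j).subset ?_).bddAbove
  rintro _ ⟨m, -, rfl⟩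
  exact ⟨m (π j), hstd _ m j rfl⟩

theorem suppMod_apply_le_iff {M : Submodule R (Fin n → R)} {j : Fin u} {c : ℤ} :
    suppMod supp M j ≤ c ↔ ∀ m ∈ M, supp m j ≤ c :=
  (csSup_le_iff (hstd.bddAbove_image M j) ⟨_, 0, M.zero_mem, rfl⟩).trans Set.forall_mem_image

theorem le_suppMod_apply {M : Submodule R (Fin n → R)} {m : Fin n → R} (hm : m ∈ M)
    (j : Fin u) : supp m j ≤ suppMod supp M j :=
  hstd.suppMod_apply_le_iff.mp le_rfl m hm

theorem suppMod_mono : Monotone (suppMod supp : Submodule R (Fin n → R) → Fin u → ℤ) :=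
  fun _ _ hMN j => hstd.suppMod_apply_le_iff.mpr fun _ hm => hstd.le_suppMod_apply (hMN hm) j

theorem suppMod_sup (hadd : ∀ v w : Fin n → R, supp (v + w) ≤ supp v ⊔ supp w)
    (M N : Submodule R (Fin n → R)) :
    suppMod supp (M ⊔ N) = suppMod supp M ⊔ suppMod supp N := by
  refine le_antisymm (fun j => hstd.suppMod_apply_le_iff.mpr fun m hm => ?_)
    (sup_le (hstd.suppMod_mono le_sup_left) (hstd.suppMod_mono le_sup_right))
  obtain ⟨v, hv, w, hw, rfl⟩ := Submodule.mem_sup.mp hm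
  exact (hadd v w j).trans
    (max_le_max (hstd.le_suppMod_apply hv j) (hstd.le_suppMod_apply hw j))

theorem suppMod_pi_inf_apply_of_le {I J : Fin n → Ideal R} {j : Fin u}
    (hIJ : I (π j) ≤ J (π j)) :
    suppMod supp (.pi .univ I ⊓ .pi .univ J) j
      = suppMod supp (.pi .univ I) j ⊓ suppMod supp (.pi .univ J) j := by
  refine le_antisymm (le_inf (hstd.suppMod_mono inf_le_left j)
    (hstd.suppMod_mono inf_le_right j)) (inf_le_left.trans ?_)
  refine hstd.suppMod_apply_le_iff.mpr fun m hm => ?_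
  rw [hstd m (Pi.single (π j) (m (π j))) j (by simp)]
  exact hstd.le_suppMod_apply (Submodule.single_mem_pi_inf_pi hIJ hm) j

theorem suppMod_pi_inf [IsLocalRing R] [IsBezout R] (I J : Fin n → Ideal R) :
    suppMod supp (.pi .univ I ⊓ .pi .univ J)
      = suppMod supp (.pi .univ I) ⊓ suppMod supp (.pi .univ J) := by
  funext j
  rcases Ideal.le_total_of_isLocalRing_of_isBezout (I (π j)) (J (π j)) with hIJ | hJI
  · exact hstd.suppMod_pi_inf_apply_of_le hIJ
  · rw [Pi.inf_apply, inf_comm, inf_comm (suppMod supp _ j)]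
    exact hstd.suppMod_pi_inf_apply_of_le hJI

end IsStandardSupport

end StandardSupport

theorem suppMod_modular_general
    {R : Type*} [CommRing R] [Fintype R] [IsLocalRing R] [IsPrincipalIdealRing R]
    (n u : ℕ) (supp : (Fin n → R) → Fin u → ℤ)
    (hadd : ∀ v w : Fin n → R, supp (v + w) ≤ supp v ⊔ supp w)
    (π : Fin u → Fin n)
    (hstd : ∀ (v w : Fin n → R) (j : Fin u), v (π j) = w (π j) → supp v j = supp w j)
    (M1 M2 : Submodule R (Fin n → R)) :
    suppMod supp (M1 ⊔ M2) = suppMod supp M1 ⊔ suppMod supp M2 ∧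
    (IsRectangular M1 → IsRectangular M2 →
      suppMod supp (M1 ⊓ M2) = suppMod supp M1 ⊓ suppMod supp M2 ∧
      suppMod supp M1 + suppMod supp M2
        = suppMod supp (M1 ⊔ M2) + suppMod supp (M1 ⊓ M2)) := by
  have hstd : IsStandardSupport supp π := hstd
  have hsup := hstd.suppMod_sup hadd M1 M2
  refine ⟨hsup, ?_⟩
  rintro ⟨I, rfl⟩ ⟨J, rfl⟩
  have hinf := hstd.suppMod_pi_inf I J
  refine ⟨hinf, ?_⟩
  rw [hsup, hinf, add_comm (_ ⊔ _), inf_add_sup]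

/-- For a finite chain ring `R` and a standard support on `R^n`:
`supp(M1+M2) = supp M1 ⊔ supp M2`; and for rectangular submodules moreover
`supp(M1∩M2) = supp M1 ⊓ supp M2`, whence `supp` is modular on rectangular
submodules. -/
theorem suppMod_modular
    {R : Type*} [CommRing R] [Fintype R] [IsLocalRing R] [IsPrincipalIdealRing R]
    (n u : ℕ) (supp : (Fin n → R) → Fin u → ℤ)
    (hzero : ∀ v : Fin n → R, supp v = 0 ↔ v = 0)
    (hsmul : ∀ (r : R) (v : Fin n → R), supp (r • v) ≤ supp v)
    (hadd : ∀ v w : Fin n → R, supp (v + w) ≤ supp v ⊔ supp w)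
    (π : Fin u → Fin n)
    (hstd : ∀ (v w : Fin n → R) (j : Fin u), v (π j) = w (π j) → supp v j = supp w j)
    (M1 M2 : Submodule R (Fin n → R)) :
    suppMod supp (M1 ⊔ M2) = suppMod supp M1 ⊔ suppMod supp M2 ∧
    (IsRectangular M1 → IsRectangular M2 →
      suppMod supp (M1 ⊓ M2) = suppMod supp M1 ⊓ suppMod supp M2 ∧
      suppMod supp M1 + suppMod supp M2
        = suppMod supp (M1 ⊔ M2) + suppMod supp (M1 ⊓ M2)) :=
  suppMod_modular_general n u supp hadd π hstd M1 M2
end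

section
/- Let (ρ, hgt, L) be a ℤ-latroid on a finite graded modular lattice L with height function hgt, and let b < a be integers. If there exists L̄ ∈ L with hgt(L̄) − ρ(L̄) = b and there exists some element of L with hgt minus ρ at least a, then d_b(ρ,hgt,L) < d_a(ρ,hgt,L), where d_a = min{hgt(M) : hgt(M) − ρ(M) ≥ a}. -/
/-- For a `ℤ`-latroid on a finite graded modular lattice, if some element realizes
the defect `b` and some element has defect at least `a > b`, then
`d_b < d_a`, where `d_a = min { hgt M : hgt M − ρ M ≥ a }`. -/
theorem latroid_generalized_weight_strict
    {L : Type*} [Lattice L] [BoundedOrder L] [Fintype L] [IsModularLattice L]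
    (hgt : L → ℤ) (hgt_bot : hgt ⊥ = 0)
    (hgt_cov : ∀ x y : L, x ⋖ y → hgt y = hgt x + 1)
    (ρ : L → ℤ) (hρ_bot : ρ ⊥ = 0)
    (hsub : ∀ x y : L, ρ (x ⊔ y) + ρ (x ⊓ y) ≤ ρ x + ρ y)
    (hbi : ∀ x y : L, x ≤ y → 0 ≤ ρ y - ρ x ∧ ρ y - ρ x ≤ hgt y - hgt x)
    (a b : ℤ) (hba : b < a)
    (hb : ∃ Lbar : L, hgt Lbar - ρ Lbar = b)
    (ha : ∃ M : L, a ≤ hgt M - ρ M) :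
    sInf (hgt '' {M : L | b ≤ hgt M - ρ M}) < sInf (hgt '' {M : L | a ≤ hgt M - ρ M}) := by
  -- notation for the two sets
  set Sa := hgt '' {M : L | a ≤ hgt M - ρ M} with hSa
  set Sb := hgt '' {M : L | b ≤ hgt M - ρ M} with hSb
  obtain ⟨M0, hM0⟩ := ha
  have hSafin : Sa.Finite := (Set.toFinite _).image _
  have hSane : Sa.Nonempty := ⟨hgt M0, ⟨M0, hM0, rfl⟩⟩
  have hSbfin : Sb.Finite := (Set.toFinite _).image _
  have hmem : sInf Sa ∈ Sa := hSane.csInf_mem hSafin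
  obtain ⟨M, hMdef, hMval⟩ := hmem
  -- b ≥ 0 since some element realizes it
  have hb0 : 0 ≤ b := by
    obtain ⟨Lbar, hLbar⟩ := hb
    have h1 := (hbi ⊥ Lbar bot_le).1
    have h2 := (hbi ⊥ Lbar bot_le).2
    omega
  -- M ≠ ⊥
  have hMne : ⊥ < M := by
    rcases eq_bot_or_bot_lt M with h | h
    · exfalso
      rw [h] at hMdef
      simp only [Set.mem_setOf_eq, hgt_bot, hρ_bot] at hMdef
      omega
    · exact h
  -- find N covered by M
  obtain ⟨N, -, hNM⟩ := exists_le_covBy_of_lt hMne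
  have hhgtN : hgt M = hgt N + 1 := hgt_cov N M hNM
  have hρN := (hbi N M hNM.le).1
  have hMdef' : a ≤ hgt M - ρ M := hMdef
  have hNdef : b ≤ hgt N - ρ N := by omega
  have hNmem : hgt N ∈ Sb := ⟨N, hNdef, rfl⟩
  have h1 : sInf Sb ≤ hgt N := csInf_le hSbfin.bddBelow hNmem
  omega
end
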